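/- Let F be a CDF on [0,1] and let (M_t) be a sequence of random variables with M_{t+1} defined as a median of the (random) posterior CDF F_t, i.e., F_t(M_{t+1}) = 1/2 almost surely. Suppose that for every δ > 0 and ω > 0, P(|F_t(B+δ) - F_t(B-δ) - 1| < ω) → 1 as t → ∞, where B ∈ (δ, 1-δ) is the true bid. Then M_t converges to B in probability. -/

import Mathlib

/-! The median `m` of a CDF `f` on `[0, 1]` lies within `ε` of `b` as soon as `f` puts mass more
than `1/2` on `[b - ε, b + ε]`: then `f (b - ε) < 1/2 < f (b + ε)`, and monotonicity traps `m`.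
Concentration makes this event have probability tending to one, for any `ε` small enough that
`b ∈ (ε, 1 - ε)`. -/

open MeasureTheory Filter Set

lemma abs_sub_lt_of_apply_eq_half {f : ℝ → ℝ} (hf : Monotone f) (hrange : ∀ x, f x ∈ Icc (0 : ℝ) 1)
    {m b ε : ℝ} (hm : f m = 1 / 2) (hmass : |f (b + ε) - f (b - ε) - 1| < 1 / 2) :
    |m - b| < ε := by
  rw [abs_lt] at hmass ⊢
  have hle : f (b + ε) ≤ 1 := (hrange _).2
  have hge : 0 ≤ f (b - ε) := (hrange _).1
  have hlo : b - ε < m := hf.reflect_lt (by linarith)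
  have hhi : m < b + ε := hf.reflect_lt (by linarith)
  constructor <;> linarith

lemma exists_pos_le_mem_Ioo_sub {b δ : ℝ} (hb : b ∈ Ioo (0 : ℝ) 1) (hδ : 0 < δ) :
    ∃ ε, 0 < ε ∧ ε ≤ δ ∧ b ∈ Ioo ε (1 - ε) := by
  obtain ⟨hb0, hb1⟩ := hb
  have hmin : 0 < min δ (min b (1 - b)) := lt_min hδ (lt_min hb0 (by linarith))
  have h₁ := min_le_left δ (min b (1 - b))
  have h₂ := (min_le_right δ _).trans (min_le_left b (1 - b))
  have h₃ := (min_le_right δ _).trans (min_le_right b (1 - b))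
  exact ⟨min δ (min b (1 - b)) / 2, by positivity, by linarith, by constructor <;> linarith⟩

lemma tendsto_measure_one_of_ae_subset {Ω : Type*} [MeasurableSpace Ω] {μ : Measure Ω}
    [IsProbabilityMeasure μ] {A B : ℕ → Set Ω} (hA : Tendsto (fun t => μ (A t)) atTop (nhds 1))
    (hAB : ∀ t, A t ≤ᵐ[μ] B t) : Tendsto (fun t => μ (B t)) atTop (nhds 1) :=
  tendsto_of_tendsto_of_tendsto_of_le_of_le hA tendsto_const_nhds
    (fun t => measure_mono_ae (hAB t)) fun _ => prob_le_one

theorem stmt5 {Ω : Type*} [MeasurableSpace Ω] (μ : Measure Ω) [IsProbabilityMeasure μ]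
    (F : ℕ → Ω → ℝ → ℝ) (M : ℕ → Ω → ℝ) (b : ℝ) (hb : b ∈ Set.Ioo (0:ℝ) 1)
    (hmono : ∀ t, ∀ᵐ ω ∂μ, Monotone (F t ω))
    (hrange : ∀ t, ∀ᵐ ω ∂μ, ∀ x, F t ω x ∈ Set.Icc (0:ℝ) 1)
    (hmed : ∀ t, ∀ᵐ ω ∂μ, F t ω (M (t+1) ω) = 1/2)
    (hconc : ∀ δ > 0, b ∈ Set.Ioo δ (1 - δ) → ∀ w > 0,
      Tendsto (fun t => μ {ω | |F t ω (b + δ) - F t ω (b - δ) - 1| < w}) atTop (nhds 1)) :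
    ∀ δ > 0, Tendsto (fun t => μ {ω | |M t ω - b| < δ}) atTop (nhds 1) := by
  intro δ hδ
  obtain ⟨ε, hε, hεδ, hbε⟩ := exists_pos_le_mem_Ioo_sub hb hδ
  rw [← tendsto_add_atTop_iff_nat 1]
  refine tendsto_measure_one_of_ae_subset (hconc ε hε hbε (1 / 2) one_half_pos) fun t => ?_
  filter_upwards [hmono t, hrange t, hmed t] with ω hf hr hm hmass
  exact (abs_sub_lt_of_apply_eq_half hf hr hm hmass).trans_le hεδ
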